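/- For P the uniform distribution on the closed Euclidean ball in ℝ^d centered at the origin with radius √(d+2), θ⋆ ∈ ℝ^d with ‖θ⋆‖ = 1, and 0 < L < 1, the unique minimizer over {θ : ‖θ‖ ≤ L} of the population risk E_{x∼P}[(⟨θ, x⟩ − ⟨θ⋆, x⟩)²] is θ_∞ = L θ⋆; moreover this population risk equals ‖θ − θ⋆‖² for every θ, so its minimum value over the constraint set is (1 − L)². -/

import Mathlib

open MeasureTheory
open scoped RealInnerProductSpace

/-- Uniform probability distribution on the closed Euclidean ball of radius `√(d+2)`
centered at the origin in `ℝ^d`. -/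
noncomputable def uniformBall (d : ℕ) : Measure (EuclideanSpace ℝ (Fin d)) :=
  (volume (Metric.closedBall (0 : EuclideanSpace ℝ (Fin d)) (Real.sqrt (d + 2))))⁻¹ •
    volume.restrict (Metric.closedBall (0 : EuclideanSpace ℝ (Fin d)) (Real.sqrt (d + 2)))

/-- The population risk `E_{x∼P}[(⟨θ, x⟩ − ⟨θ⋆, x⟩)²]` for `P` the uniform
distribution on the ball of radius `√(d+2)`. -/
noncomputable def popRisk (d : ℕ) (θstar θ : EuclideanSpace ℝ (Fin d)) : ℝ :=
  ∫ x, (⟪θ, x⟫ - ⟪θstar, x⟫) ^ 2 ∂(uniformBall d)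

/-!
By rotation invariance the second-moment matrix `∫ x xᵀ` of a centred ball is a multiple of the
identity, and its trace `∫ ‖x‖²` is computed in polar coordinates: for the uniform distribution on
the ball of radius `R` in dimension `n`, `E⟨v, x⟩² = ‖v‖² R² / (n + 2)`. The radius `√(d + 2)` makes
this `‖v‖²`, so the population risk is `‖θ - θ⋆‖²`, and minimizing it over the ball of radius `L`
is the metric projection of the unit vector `θ⋆`, which is `L θ⋆` and is unique by strict
convexity of the norm.
-/

open Metric Set Module

section NormedSpace

variable {E : Type*} [NormedAddCommGroup E]

theorem one_sub_le_norm_sub_of_norm_eq_one {u x : E} (hu : ‖u‖ = 1) {L : ℝ} (hx : ‖x‖ ≤ L) :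
    1 - L ≤ ‖x - u‖ := by
  have := norm_sub_norm_le u x
  rw [hu, norm_sub_rev] at this
  linarith

variable [NormedSpace ℝ E]

theorem norm_smul_sub_self_of_norm_eq_one {u : E} (hu : ‖u‖ = 1) {L : ℝ} (hL : L ≤ 1) :
    ‖L • u - u‖ = 1 - L := by
  rw [show L • u - u = (L - 1) • u by rw [sub_smul, one_smul], norm_smul, hu, mul_one,
    Real.norm_of_nonpos (by linarith), neg_sub]

theorem eq_smul_of_norm_le_of_norm_sub_eq [StrictConvexSpace ℝ E] {u x : E} (hu : ‖u‖ = 1)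
    {L : ℝ} (hx : ‖x‖ ≤ L) (h : ‖x - u‖ = 1 - L) : x = L • u := by
  have hxL : ‖x‖ = L := le_antisymm hx (by linarith [norm_sub_norm_le u x, norm_sub_rev x u])
  have := eq_lineMap_of_dist_eq_mul_of_dist_eq_mul (x := (0 : E)) (y := x) (z := u) (r := L)
    (by simp [hu, hxL]) (by simp [dist_eq_norm, hu, h])
  simpa [AffineMap.lineMap_apply_module] using this

variable [FiniteDimensional ℝ E] [MeasurableSpace E] [BorelSpace E] [Nontrivial E]

theorem setIntegral_closedBall_norm_sq (μ : Measure E) [μ.IsAddHaarMeasure] {R : ℝ}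
    (hR : 0 ≤ R) :
    ∫ x in closedBall 0 R, ‖x‖ ^ 2 ∂μ =
      finrank ℝ E * R ^ 2 / (finrank ℝ E + 2) * μ.real (closedBall 0 R) := by
  set n := finrank ℝ E
  have hn : 0 < n := finrank_pos
  have hradial : ∫ y in Ioi (0 : ℝ), y ^ (n - 1) • (Iic R).indicator (· ^ 2) y =
      R ^ (n + 2) / (n + 2) := by
    have hpow : ∀ y : ℝ, y ^ (n - 1) • (Iic R).indicator (· ^ 2) y =
        (Iic R).indicator (· ^ (n + 1)) y := by
      intro y
      by_cases hy : y ∈ Iic R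
      · simp only [indicator_of_mem hy, smul_eq_mul, ← pow_add]
        congr 1; omega
      · simp [hy]
    rw [funext hpow, setIntegral_indicator measurableSet_Iic, Ioi_inter_Iic,
      ← intervalIntegral.integral_of_le hR, integral_pow]
    push_cast
    ring_nf
  calc ∫ x in closedBall 0 R, ‖x‖ ^ 2 ∂μ = ∫ x, (Iic R).indicator (· ^ 2) ‖x‖ ∂μ := by
        rw [← integral_indicator measurableSet_closedBall]
        congr 1 with x
        by_cases hx : ‖x‖ ≤ R <;> simp [indicator, hx]
    _ = n * μ.real (ball 0 1) * (R ^ (n + 2) / (n + 2)) := by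
        rw [integral_fun_norm_addHaar, hradial, nsmul_eq_mul, smul_eq_mul, mul_assoc]
    _ = _ := by
        rw [Measure.addHaar_real_closedBall μ 0 hR, pow_add]
        ring

end NormedSpace

section InnerProductSpace

variable {E : Type*} [NormedAddCommGroup E] [InnerProductSpace ℝ E] [MeasurableSpace E]
  [BorelSpace E]

theorem sum_setIntegral_inner_sq {ι : Type*} [Fintype ι] (b : OrthonormalBasis ι ℝ E)
    (μ : Measure E) [IsFiniteMeasureOnCompacts μ] {s : Set E} (hs : IsCompact s) :
    ∑ i, ∫ x in s, ⟪b i, x⟫ ^ 2 ∂μ = ∫ x in s, ‖x‖ ^ 2 ∂μ := by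
  rw [← integral_finsetSum _ fun i _ ↦
    ((continuous_const.inner continuous_id).pow 2).continuousOn.integrableOn_compact hs]
  congr with x
  simp_rw [sq, ← real_inner_self_eq_norm_mul_norm, ← b.sum_inner_mul_inner x x, real_inner_comm x]

variable [FiniteDimensional ℝ E]

theorem setIntegral_closedBall_inner_sq_map (f : E ≃ₗᵢ[ℝ] E) (v : E) (R : ℝ) :
    ∫ x in closedBall 0 R, ⟪f v, x⟫ ^ 2 = ∫ x in closedBall 0 R, ⟪v, x⟫ ^ 2 := by
  have hball : f ⁻¹' closedBall 0 R = closedBall 0 R := by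
    ext x
    simp
  rw [← f.measurePreserving.setIntegral_preimage_emb f.toHomeomorph.measurableEmbedding, hball]
  simp [f.inner_map_map]

theorem setIntegral_closedBall_inner_sq_congr_norm {v w : E} (h : ‖v‖ = ‖w‖) (R : ℝ) :
    ∫ x in closedBall 0 R, ⟪v, x⟫ ^ 2 = ∫ x in closedBall 0 R, ⟪w, x⟫ ^ 2 := by
  rw [← Submodule.reflection_sub h, setIntegral_closedBall_inner_sq_map]

theorem setIntegral_closedBall_inner_sq (v : E) {R : ℝ} (hR : 0 ≤ R) :
    ∫ x in closedBall 0 R, ⟪v, x⟫ ^ 2 =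
      ‖v‖ ^ 2 * R ^ 2 / (finrank ℝ E + 2) * volume.real (closedBall (0 : E) R) := by
  rcases subsingleton_or_nontrivial E with hE | hE
  · simp [Subsingleton.elim v 0]
  set b := stdOrthonormalBasis ℝ E
  have hscale : ∀ i, ∫ x in closedBall 0 R, ⟪v, x⟫ ^ 2 =
      ‖v‖ ^ 2 * ∫ x in closedBall 0 R, ⟪b i, x⟫ ^ 2 := by
    intro i
    have hnorm : ‖v‖ = ‖‖v‖ • b i‖ := by simp [norm_smul, b.orthonormal.1 i]
    rw [setIntegral_closedBall_inner_sq_congr_norm hnorm, ← integral_const_mul]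
    simp only [real_inner_smul_left, mul_pow]
  have htrace : finrank ℝ E * ∫ x in closedBall 0 R, ⟪v, x⟫ ^ 2 =
      ‖v‖ ^ 2 * ∫ x in closedBall (0 : E) R, ‖x‖ ^ 2 := by
    rw [← sum_setIntegral_inner_sq b volume (isCompact_closedBall 0 R), Finset.mul_sum,
      ← Finset.sum_congr rfl fun i _ ↦ hscale i, Finset.sum_const, Finset.card_univ,
      Fintype.card_fin, nsmul_eq_mul]
  have hn : (finrank ℝ E : ℝ) ≠ 0 := by exact_mod_cast finrank_pos.ne'
  rw [setIntegral_closedBall_norm_sq volume hR] at htrace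
  field_simp at htrace ⊢
  linear_combination htrace

theorem integral_inner_sq_cond_closedBall (v : E) {R : ℝ} (hR : 0 < R) :
    ∫ x, ⟪v, x⟫ ^ 2 ∂(ProbabilityTheory.cond volume (closedBall 0 R)) =
      ‖v‖ ^ 2 * R ^ 2 / (finrank ℝ E + 2) := by
  have hvol : volume.real (closedBall (0 : E) R) ≠ 0 :=
    (ENNReal.toReal_pos (measure_closedBall_pos volume 0 hR).ne'
      measure_closedBall_lt_top.ne).ne'
  rw [ProbabilityTheory.cond, integral_smul_measure, setIntegral_closedBall_inner_sq v hR.le,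
    ENNReal.toReal_inv, ← measureReal_def, smul_eq_mul]
  field_simp

end InnerProductSpace

theorem popRisk_eq_norm_sub_sq (d : ℕ) (θstar θ : EuclideanSpace ℝ (Fin d)) :
    popRisk d θstar θ = ‖θ - θstar‖ ^ 2 := by
  have hR : (0 : ℝ) < Real.sqrt (d + 2) := Real.sqrt_pos.2 (by positivity)
  simp_rw [popRisk, ← inner_sub_left]
  rw [uniformBall, ← ProbabilityTheory.cond, integral_inner_sq_cond_closedBall _ hR,
    Real.sq_sqrt (by positivity), finrank_euclideanSpace_fin]
  field_simp

theorem population_risk_minimizer_general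
    (d : ℕ)
    (θstar : EuclideanSpace ℝ (Fin d)) (L : ℝ)
    (hθstar : ‖θstar‖ = 1) (hL1 : L < 1) :
    (∀ θ : EuclideanSpace ℝ (Fin d), popRisk d θstar θ = ‖θ - θstar‖ ^ 2) ∧
    (∀ θ : EuclideanSpace ℝ (Fin d), ‖θ‖ ≤ L →
      popRisk d θstar (L • θstar) ≤ popRisk d θstar θ) ∧
    (∀ θ : EuclideanSpace ℝ (Fin d), ‖θ‖ ≤ L →
      popRisk d θstar θ = popRisk d θstar (L • θstar) → θ = L • θstar) ∧
    popRisk d θstar (L • θstar) = (1 - L) ^ 2 := by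
  have hopt : ‖L • θstar - θstar‖ = 1 - L := norm_smul_sub_self_of_norm_eq_one hθstar hL1.le
  refine ⟨popRisk_eq_norm_sub_sq d θstar, fun θ hθ ↦ ?_, fun θ hθ heq ↦ ?_, ?_⟩
  · rw [popRisk_eq_norm_sub_sq, popRisk_eq_norm_sub_sq, hopt]
    exact pow_le_pow_left₀ (by linarith) (one_sub_le_norm_sub_of_norm_eq_one hθstar hθ) 2
  · rw [popRisk_eq_norm_sub_sq, popRisk_eq_norm_sub_sq, hopt,
      pow_left_inj₀ (norm_nonneg _) (by linarith) two_ne_zero] at heq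
    exact eq_smul_of_norm_le_of_norm_sub_eq hθstar hθ heq
  · rw [popRisk_eq_norm_sub_sq, hopt]

/-- **Population minimizer:** the population risk equals `‖θ − θ⋆‖²` for every `θ`;
`θ_∞ = L θ⋆` minimizes it over `{θ : ‖θ‖ ≤ L}`, it is the unique such minimizer,
and the minimum value is `(1 − L)²`. -/
theorem population_risk_minimizer
    (d : ℕ) (hd : 1 ≤ d)
    (θstar : EuclideanSpace ℝ (Fin d)) (L : ℝ)
    (hθstar : ‖θstar‖ = 1) (hL0 : 0 < L) (hL1 : L < 1) :
    (∀ θ : EuclideanSpace ℝ (Fin d), popRisk d θstar θ = ‖θ - θstar‖ ^ 2) ∧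
    (∀ θ : EuclideanSpace ℝ (Fin d), ‖θ‖ ≤ L →
      popRisk d θstar (L • θstar) ≤ popRisk d θstar θ) ∧
    (∀ θ : EuclideanSpace ℝ (Fin d), ‖θ‖ ≤ L →
      popRisk d θstar θ = popRisk d θstar (L • θstar) → θ = L • θstar) ∧
    popRisk d θstar (L • θstar) = (1 - L) ^ 2 :=
  population_risk_minimizer_general d θstar L hθstar hL1
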